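/- arXiv:2304.12920 — 6 statements merged into one kernel-verified Lean document; each statement's English description precedes it below -/
import Mathlib

section
/- Let 0<α<1, λ⋆=(1−α)/√((1−α)²+α²), λ₁=2(1−α)²/(α(2−α)), and let α₁≈0.4825 be the unique real root of 7α⁴−20α³+24α²−16α+4=0 on (0,1). If f∈U(α,λ) and either (α∈[α₁,1) and 0<λ≤λ₁) or (α∈(0,α₁] and 0<λ≤λ⋆), then the second logarithmic coefficient satisfies |γ₂| ≤ λ/(2(2−α)). -/
open Complex Metric Set

/-- The class `U(α,λ)`: analytic functions on the unit disc of the form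
`f(z) = z + a₂z² + ⋯` satisfying `|(z/f(z))^(1+α) f'(z) - 1| < λ` there
(principal branch). -/
noncomputable def UClass (a l : ℝ) : Set (ℂ → ℂ) :=
  {f | AnalyticOnNhd ℂ f (ball 0 1) ∧ f 0 = 0 ∧ deriv f 0 = 1 ∧
    ∀ z ∈ ball (0:ℂ) 1, z ≠ 0 →
      ‖(z / f z) ^ ((1:ℂ) + (a:ℂ)) * deriv f z - 1‖ < l}

/-- `IsLogCoeff f γ` means the `γ n`, `n ≥ 1`, are the logarithmic coefficients
of `f`, i.e. `log (f z / z) = 2 ∑_{n≥1} γ n zⁿ` on the punctured unit disc. -/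
def IsLogCoeff (f : ℂ → ℂ) (γ : ℕ → ℂ) : Prop :=
  ∀ z ∈ ball (0:ℂ) 1, z ≠ 0 →
    HasSum (fun n : ℕ => 2 * γ (n + 1) * z ^ (n + 1)) (Complex.log (f z / z))

/-!
Write `f z = z * exp (L z)` with `L = 2 ∑ γₙ zⁿ`. Then
`p := (z / f)^(1+α) f' = e^{-αL} (1 + z L')`, the principal branch being harmless because
`Im L < π` on the disc (maximum principle for `e^{-iL}`). The defining condition of `U(α,λ)` says
that `p` maps the disc into the closed disc of radius `λ` about `p 0 = 1`, so the Schwarz–Pick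
inequality gives `|p''(0)/2| ≤ λ - |p'(0)|²/λ`. Since `p'(0) = 2(1-α)γ₁` and
`p''(0)/2 = 2(2-α)(γ₂ - αγ₁²)`, this yields
`|γ₂| ≤ λ/(2(2-α)) + (αλ(2-α) - 2(1-α)²) |γ₁|² / (λ(2-α))`, and the last term is `≤ 0` when
`λ ≤ λ₁`. For `α ≤ α₁` the quartic is nonnegative, which is exactly `λ⋆ ≤ λ₁`.
-/

open scoped ComplexConjugate

theorem HasFPowerSeriesAt.iteratedDeriv_eq_factorial_mul_coeff {𝕜 : Type*}
    [NontriviallyNormedField 𝕜] [CompleteSpace 𝕜] [CharZero 𝕜] {f : 𝕜 → 𝕜}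
    {p : FormalMultilinearSeries 𝕜 𝕜 𝕜} {x : 𝕜} (h : HasFPowerSeriesAt f p x) (n : ℕ) :
    iteratedDeriv n f x = n.factorial * p.coeff n := by
  rw [h.eq_formalMultilinearSeries h.analyticAt.hasFPowerSeriesAt,
    FormalMultilinearSeries.coeff_ofScalars,
    mul_div_cancel₀ _ (by exact_mod_cast n.factorial_ne_zero)]

theorem AnalyticAt.iteratedDeriv_two_eq_two_mul_deriv_dslope {𝕜 : Type*}
    [NontriviallyNormedField 𝕜] [CompleteSpace 𝕜] [CharZero 𝕜] {f : 𝕜 → 𝕜} {x : 𝕜}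
    (h : AnalyticAt 𝕜 f x) : iteratedDeriv 2 f x = 2 * deriv (dslope f x) x := by
  obtain ⟨p, hp⟩ := h
  have h_dslope : deriv (dslope f x) x = p.fslope.coeff 1 :=
    hp.has_fpower_series_dslope_fslope.deriv
  rw [hp.iteratedDeriv_eq_factorial_mul_coeff, h_dslope, FormalMultilinearSeries.coeff_fslope]
  norm_num

namespace Complex

theorem norm_conj_mul_lt_one {c w : ℂ} (hc : ‖c‖ < 1) (hw : ‖w‖ ≤ 1) : ‖conj c * w‖ < 1 := by
  rw [norm_mul, RCLike.norm_conj]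
  nlinarith [norm_nonneg c, norm_nonneg w]

theorem norm_sub_div_one_sub_conj_mul_le_one {c w : ℂ} (hc : ‖c‖ < 1) (hw : ‖w‖ ≤ 1) :
    ‖(w - c) / (1 - conj c * w)‖ ≤ 1 := by
  have hden : 0 < ‖1 - conj c * w‖ :=
    norm_pos_iff.2 <| sub_ne_zero.2 fun h =>
      (norm_conj_mul_lt_one hc hw).ne (by rw [← h, norm_one])
  have key : ‖1 - conj c * w‖ ^ 2 - ‖w - c‖ ^ 2 = (1 - ‖w‖ ^ 2) * (1 - ‖c‖ ^ 2) := by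
    simp only [Complex.sq_norm, normSq_apply, sub_re, sub_im, mul_re, mul_im, one_re, one_im,
      conj_re, conj_im]
    ring
  rw [norm_div, div_le_one hden]
  refine (pow_le_pow_iff_left₀ (norm_nonneg _) hden.le two_ne_zero).1 ?_
  have hw2 : ‖w‖ ^ 2 ≤ 1 := pow_le_one₀ (norm_nonneg w) hw
  have hc2 : ‖c‖ ^ 2 ≤ 1 := pow_le_one₀ (norm_nonneg c) hc.le
  nlinarith [mul_nonneg (sub_nonneg.2 hw2) (sub_nonneg.2 hc2)]

theorem norm_deriv_le_one_sub_sq_of_mapsTo_ball {g : ℂ → ℂ}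
    (hd : DifferentiableOn ℂ g (ball 0 1)) (h_maps : MapsTo g (ball 0 1) (closedBall 0 1)) :
    ‖deriv g 0‖ ≤ 1 - ‖g 0‖ ^ 2 := by
  have h0 : (0 : ℂ) ∈ ball (0 : ℂ) 1 := mem_ball_self one_pos
  have hg : ∀ z ∈ ball (0 : ℂ) 1, ‖g z‖ ≤ 1 := fun z hz =>
    mem_closedBall_zero_iff.1 (h_maps hz)
  set c := g 0 with hc_def
  rcases (hg 0 h0).lt_or_eq with hc | hc
  · have hden : ∀ z ∈ ball (0 : ℂ) 1, 1 - conj c * g z ≠ 0 := fun z hz =>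
      sub_ne_zero.2 fun h => (norm_conj_mul_lt_one hc (hg z hz)).ne (by rw [← h, norm_one])
    set ψ : ℂ → ℂ := fun z => (g z - c) / (1 - conj c * g z)
    have hψ_maps : MapsTo ψ (ball 0 1) (closedBall (ψ 0) 1) := fun z hz => by
      simpa [ψ, c] using norm_sub_div_one_sub_conj_mul_le_one hc (hg z hz)
    have hψd : DifferentiableOn ℂ ψ (ball 0 1) :=
      (hd.sub_const c).div ((differentiableOn_const 1).sub (hd.const_mul _)) hden
    have hψ_le := norm_deriv_le_div_of_mapsTo_ball hψd hψ_maps one_pos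
    have hg' : HasDerivAt g (deriv g 0) 0 :=
      (hd.differentiableAt (isOpen_ball.mem_nhds h0)).hasDerivAt
    have hc2 : 1 - conj c * c = ((1 - ‖c‖ ^ 2 : ℝ) : ℂ) := by push_cast [conj_mul']; ring
    have hc2pos : 0 < 1 - ‖c‖ ^ 2 := by nlinarith [norm_nonneg c]
    have hψ' : deriv ψ 0 = deriv g 0 / ((1 - ‖c‖ ^ 2 : ℝ) : ℂ) := by
      have : HasDerivAt ψ _ 0 := (hg'.sub_const c).div
        ((hasDerivAt_const 0 (1 : ℂ)).sub (hg'.const_mul (conj c))) (hden 0 h0)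
      have hne : ((1 - ‖c‖ ^ 2 : ℝ) : ℂ) ≠ 0 := ofReal_ne_zero.2 hc2pos.ne'
      rw [this.deriv, ← hc_def, hc2, sub_self]
      field_simp
      ring
    rwa [hψ', norm_div, norm_real, Real.norm_of_nonneg hc2pos.le, div_one,
      div_le_one hc2pos] at hψ_le
  · have hconst : EqOn g (fun _ => c) (ball 0 1) :=
      eqOn_of_isPreconnected_of_isMaxOn_norm (convex_ball 0 1).isPreconnected isOpen_ball hd h0
        fun z hz => by simpa [hc] using hg z hz
    have : deriv g 0 = 0 := by
      rw [(Filter.eventuallyEq_of_mem (isOpen_ball.mem_nhds h0) hconst).deriv_eq, deriv_const]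
    rw [this, hc]
    norm_num

theorem mul_norm_deriv_le_sq_sub_sq_of_mapsTo_ball {g : ℂ → ℂ} {R : ℝ} (hR : 0 < R)
    (hd : DifferentiableOn ℂ g (ball 0 1)) (h_maps : MapsTo g (ball 0 1) (closedBall 0 R)) :
    R * ‖deriv g 0‖ ≤ R ^ 2 - ‖g 0‖ ^ 2 := by
  have hR' : (R : ℂ) ≠ 0 := ofReal_ne_zero.2 hR.ne'
  have h := norm_deriv_le_one_sub_sq_of_mapsTo_ball (g := fun z => g z / R) (hd.div_const _)
    fun z hz => by
      simpa [norm_div, div_le_one hR, abs_of_pos hR] using h_maps hz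
  rw [deriv_div_const, norm_div, norm_div, norm_real, Real.norm_of_nonneg hR.le] at h
  have : R * (‖deriv g 0‖ / R) * R ≤ R * (1 - (‖g 0‖ / R) ^ 2) * R := by gcongr
  field_simp at this
  linarith

theorem mul_norm_iteratedDeriv_two_le_of_mapsTo_ball {f : ℂ → ℂ} {R : ℝ} (hR : 0 < R)
    (hd : DifferentiableOn ℂ f (ball 0 1)) (h_maps : MapsTo f (ball 0 1) (closedBall (f 0) R)) :
    R * ‖iteratedDeriv 2 f 0‖ ≤ 2 * (R ^ 2 - ‖deriv f 0‖ ^ 2) := by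
  have hball : ball (0 : ℂ) 1 ∈ nhds 0 := ball_mem_nhds 0 one_pos
  have h := mul_norm_deriv_le_sq_sub_sq_of_mapsTo_ball hR
    ((differentiableOn_dslope hball).2 hd) fun z hz => by
      simpa using norm_dslope_le_div_of_mapsTo_ball hd h_maps hz
  rw [dslope_same] at h
  rw [(hd.analyticAt hball).iteratedDeriv_two_eq_two_mul_deriv_dslope, norm_mul, Complex.norm_two]
  linarith

theorem im_lt_of_im_le {L : ℂ → ℂ} {U : Set ℂ} {M : ℝ} {z₀ z : ℂ} (hU : IsPreconnected U)
    (hUo : IsOpen U) (hL : DifferentiableOn ℂ L U) (hle : ∀ w ∈ U, (L w).im ≤ M)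
    (hz₀ : z₀ ∈ U) (hlt : (L z₀).im < M) (hz : z ∈ U) : (L z).im < M := by
  refine (hle z hz).lt_of_ne fun heq => hlt.ne ?_
  -- maximum modulus principle for `exp (-I * L)`, whose norm is `exp (im L)`
  have hnorm : ∀ w, ‖exp (-I * L w)‖ = Real.exp (L w).im := fun w => by simp [norm_exp]
  have hconst := eqOn_of_isPreconnected_of_isMaxOn_norm hU hUo
    ((hL.const_mul (-I)).cexp) hz fun w hw => by
      simpa only [mem_ofPred_eq, Function.comp_apply, hnorm, heq, Real.exp_le_exp] using
        hle w hw
  have := congrArg norm (hconst hz₀)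
  simp only [Function.const_apply, hnorm, Real.exp_eq_exp] at this
  rw [this, heq]

end Complex

/-- For `f z = z * exp (L z)` this is `(z / f z) ^ (1 + a) * deriv f z` away from the branch
cut (`cpow_mul_deriv_eq_quotPowDeriv`). -/
noncomputable def quotPowDeriv (a : ℂ) (L : ℂ → ℂ) (z : ℂ) : ℂ :=
  exp (-a * L z) * (1 + z * deriv L z)

section quotPowDeriv

variable {a : ℂ} {L : ℂ → ℂ}

theorem hasDerivAt_quotPowDeriv {z : ℂ} (hL : AnalyticAt ℂ L z) :
    HasDerivAt (quotPowDeriv a L)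
      (exp (-a * L z) * ((1 - a) * deriv L z - a * z * deriv L z ^ 2 + z * deriv (deriv L) z))
      z := by
  have hL' := hL.differentiableAt.hasDerivAt
  have hL'' := hL.deriv.differentiableAt.hasDerivAt
  have h : HasDerivAt (quotPowDeriv a L) _ z :=
    ((hL'.const_mul (-a)).cexp).mul (((hasDerivAt_id' z).mul hL'').const_add 1)
  exact h.congr_deriv (by ring)

theorem quotPowDeriv_zero (h0 : L 0 = 0) : quotPowDeriv a L 0 = 1 := by
  simp [quotPowDeriv, h0]

theorem deriv_quotPowDeriv_zero (hL : AnalyticAt ℂ L 0) (h0 : L 0 = 0) :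
    deriv (quotPowDeriv a L) 0 = (1 - a) * deriv L 0 := by
  simp [(hasDerivAt_quotPowDeriv hL).deriv, h0]

theorem iteratedDeriv_two_quotPowDeriv_zero (hL : AnalyticAt ℂ L 0) (h0 : L 0 = 0) :
    iteratedDeriv 2 (quotPowDeriv a L) 0 =
      (2 - a) * iteratedDeriv 2 L 0 - a * (2 - a) * deriv L 0 ^ 2 := by
  have hderiv : deriv (quotPowDeriv a L) =ᶠ[nhds 0] fun z =>
      exp (-a * L z) * ((1 - a) * deriv L z - a * z * deriv L z ^ 2 + z * deriv (deriv L) z) :=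
    hL.eventually_analyticAt.mono fun z hz => (hasDerivAt_quotPowDeriv hz).deriv
  have hL' := hL.differentiableAt.hasDerivAt
  have hL'' := hL.deriv.differentiableAt.hasDerivAt
  have hL''' := hL.deriv.deriv.differentiableAt.hasDerivAt
  have h : HasDerivAt (fun z =>
      exp (-a * L z) * ((1 - a) * deriv L z - a * z * deriv L z ^ 2 + z * deriv (deriv L) z))
      _ 0 := ((hL'.const_mul (-a)).cexp).mul
    ((((hL''.const_mul (1 - a)).sub (((hasDerivAt_id' 0).const_mul a).mul (hL''.pow 2))).add
      ((hasDerivAt_id' 0).mul hL''')))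
  rw [iteratedDeriv_succ, iteratedDeriv_one, hderiv.deriv_eq, h.deriv, iteratedDeriv_succ,
    iteratedDeriv_one, h0]
  simp only [mul_zero, exp_zero, neg_mul, mul_neg, one_mul, zero_mul, sub_zero, add_zero, mul_one,
    Pi.pow_apply, Nat.cast_ofNat, Nat.add_one_sub_one, pow_one]
  ring

end quotPowDeriv

theorem cpow_mul_deriv_eq_quotPowDeriv {f L : ℂ → ℂ} {U : Set ℂ} {z : ℂ} (a : ℂ)
    (hUo : IsOpen U) (hfL : EqOn f (fun z => z * exp (L z)) U) (hL : AnalyticAt ℂ L z)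
    (hz : z ∈ U) (hz0 : z ≠ 0) (him : -Real.pi < (L z).im) (him' : (L z).im < Real.pi) :
    (z / f z) ^ (1 + a) * deriv f z = quotPowDeriv a L z := by
  have h : HasDerivAt (fun w => w * exp (L w)) _ z :=
    (hasDerivAt_id' z).mul hL.differentiableAt.hasDerivAt.cexp
  have hquot : z / f z = exp (-L z) := by
    rw [hfL hz, exp_neg]
    field_simp
  rw [(Filter.eventuallyEq_of_mem (hUo.mem_nhds hz) hfL).deriv_eq, h.deriv, hquot,
    cpow_def_of_ne_zero (exp_ne_zero _),
    log_exp (by simpa using him') (by rw [neg_im]; linarith), quotPowDeriv,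
    show -a * L z = -L z * (1 + a) + L z by ring, exp_add]
  ring

noncomputable def logQuot (f : ℂ → ℂ) (z : ℂ) : ℂ := if z = 0 then 0 else log (f z / z)

theorem logQuot_zero (f : ℂ → ℂ) : logQuot f 0 = 0 := if_pos rfl

theorem eqOn_mul_exp_logQuot {f : ℂ → ℂ} {U : Set ℂ} (hU : IsPreconnected U)
    (h0U : (0 : ℂ) ∈ U) (hf : AnalyticOnNhd ℂ f U) (hL : AnalyticOnNhd ℂ (logQuot f) U)
    (hf' : deriv f 0 ≠ 0) : EqOn f (fun z => z * exp (logQuot f z)) U := by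
  have hne : ∀ᶠ z in nhdsWithin 0 {0}ᶜ, f z ≠ 0 :=
    (hf 0 h0U).differentiableAt.hasDerivAt.eventually_ne hf'
  refine hf.eqOn_of_preconnected_of_frequently_eq (analyticOnNhd_id.mul hL.cexp) hU h0U
    (Filter.Eventually.frequently ?_)
  filter_upwards [hne, self_mem_nhdsWithin] with z hfz (hz : z ≠ 0)
  rw [logQuot, if_neg hz, exp_log (div_ne_zero hfz hz), mul_div_cancel₀ _ hz]

theorem IsLogCoeff.hasFPowerSeriesOnBall {f : ℂ → ℂ} {γ : ℕ → ℂ} (hγ : IsLogCoeff f γ) :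
    HasFPowerSeriesOnBall (logQuot f)
      (FormalMultilinearSeries.ofScalars ℂ fun n => if n = 0 then 0 else 2 * γ n) 0 1 := by
  set c : ℕ → ℂ := fun n => if n = 0 then 0 else 2 * γ n
  have hsum : ∀ z : ℂ, ‖z‖ < 1 → HasSum (fun n => c n * z ^ n) (logQuot f z) := by
    intro z hz
    rcases eq_or_ne z 0 with rfl | hz0
    · convert hasSum_zero with n
      · cases n <;> simp [c]
      · simp [logQuot]
    · rw [← hasSum_nat_add_iff' 1]
      simpa [logQuot, hz0, c] using hγ z (mem_ball_zero_iff.2 hz) hz0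
  refine ⟨ENNReal.le_of_forall_nnreal_lt fun r hr => ?_, one_pos, fun {y} hy => ?_⟩
  · have hr' : ‖(r : ℂ)‖ < 1 := by simpa using hr
    refine FormalMultilinearSeries.le_radius_of_tendsto _ (l := 0) ?_
    simpa [FormalMultilinearSeries.ofScalars_norm] using
      (hsum r hr').summable.tendsto_atTop_zero.norm
  · have hy' : ‖y‖ < 1 := by simpa [← ofReal_norm] using hy
    simpa [FormalMultilinearSeries.ofScalars_apply_eq, mul_comm] using hsum y hy'

theorem IsLogCoeff.analyticOnNhd_logQuot {f : ℂ → ℂ} {γ : ℕ → ℂ} (hγ : IsLogCoeff f γ) :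
    AnalyticOnNhd ℂ (logQuot f) (ball 0 1) := by
  have h := hγ.hasFPowerSeriesOnBall.analyticOnNhd
  rwa [← ENNReal.coe_one, eball_coe, NNReal.coe_one] at h

theorem IsLogCoeff.deriv_logQuot_zero {f : ℂ → ℂ} {γ : ℕ → ℂ} (hγ : IsLogCoeff f γ) :
    deriv (logQuot f) 0 = 2 * γ 1 := by
  rw [← iteratedDeriv_one,
    hγ.hasFPowerSeriesOnBall.hasFPowerSeriesAt.iteratedDeriv_eq_factorial_mul_coeff]
  simp [FormalMultilinearSeries.coeff_ofScalars]

theorem IsLogCoeff.iteratedDeriv_two_logQuot_zero {f : ℂ → ℂ} {γ : ℕ → ℂ}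
    (hγ : IsLogCoeff f γ) : iteratedDeriv 2 (logQuot f) 0 = 4 * γ 2 := by
  rw [hγ.hasFPowerSeriesOnBall.hasFPowerSeriesAt.iteratedDeriv_eq_factorial_mul_coeff,
    FormalMultilinearSeries.coeff_ofScalars, if_neg two_ne_zero, Nat.factorial_two]
  push_cast
  ring

theorem mapsTo_quotPowDeriv_of_mem_UClass {a l : ℝ} {f : ℂ → ℂ} {γ : ℕ → ℂ}
    (hf : f ∈ UClass a l) (hγ : IsLogCoeff f γ) (hl : 0 ≤ l) :
    MapsTo (quotPowDeriv a (logQuot f)) (ball 0 1) (closedBall 1 l) := by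
  obtain ⟨hfa, -, hf', hfb⟩ := hf
  have h0 : (0 : ℂ) ∈ ball (0 : ℂ) 1 := mem_ball_self one_pos
  have hL := hγ.analyticOnNhd_logQuot
  have hfL := eqOn_mul_exp_logQuot (convex_ball 0 1).isPreconnected h0 hfa hL
    (by rw [hf']; exact one_ne_zero)
  intro z hz
  rcases eq_or_ne z 0 with rfl | hz0
  · simpa [quotPowDeriv_zero (logQuot_zero f)] using hl
  have him' : (logQuot f z).im < Real.pi := by
    refine im_lt_of_im_le (convex_ball 0 1).isPreconnected isOpen_ball hL.differentiableOn
      (fun w _ => ?_) h0 (by simp [logQuot_zero, Real.pi_pos]) hz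
    unfold logQuot
    split_ifs
    exacts [by simp [Real.pi_pos.le], log_im_le_pi _]
  have him : -Real.pi < (logQuot f z).im := by
    rw [logQuot, if_neg hz0]
    exact neg_pi_lt_log_im _
  rw [mem_closedBall, dist_eq_norm,
    ← cpow_mul_deriv_eq_quotPowDeriv a isOpen_ball hfL (hL z hz) hz hz0 him him']
  exact (hfb z hz hz0).le

theorem nonneg_of_le_of_unique_zero {P : ℝ → ℝ} {a a₁ : ℝ} (hP : Continuous P)
    (hP0 : 0 < P 0) (ha0 : 0 ≤ a) (ha1 : a < 1) (huniq : ∀ x ∈ Ioo 0 1, P x = 0 → x = a₁)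
    (haa : a ≤ a₁) :
    0 ≤ P a := by
  by_contra! h
  obtain ⟨y, ⟨hy0, hya⟩, hy⟩ := intermediate_value_Ioo' ha0 hP.continuousOn ⟨h, hP0⟩
  linarith [huniq y ⟨hy0, hya.trans ha1⟩ hy]

/-- `λ⋆ ≤ λ₁` exactly when `7a⁴ - 20a³ + 24a² - 16a + 4 ≥ 0`: this polynomial is
`4(1-a)²((1-a)² + a²) - a²(2-a)²`. -/
theorem mul_le_of_le_div_sqrt {a l : ℝ} (ha1 : a < 1) (hl0 : 0 ≤ l)
    (hP : 0 ≤ 7 * a ^ 4 - 20 * a ^ 3 + 24 * a ^ 2 - 16 * a + 4)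
    (hl : l ≤ (1 - a) / Real.sqrt ((1 - a) ^ 2 + a ^ 2)) :
    l * (a * (2 - a)) ≤ 2 * (1 - a) ^ 2 := by
  have hS : 0 < (1 - a) ^ 2 + a ^ 2 := by nlinarith
  set s := Real.sqrt ((1 - a) ^ 2 + a ^ 2)
  have hs : 0 < s := Real.sqrt_pos.2 hS
  have hs2 : s ^ 2 = (1 - a) ^ 2 + a ^ 2 := Real.sq_sqrt hS.le
  have hsq : a * (2 - a) ≤ 2 * (1 - a) * s := by
    refine abs_le_of_sq_le_sq' ?_ (by nlinarith) |>.2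
    nlinarith
  rw [le_div_iff₀ hs] at hl
  nlinarith [mul_le_mul_of_nonneg_left hsq hl0,
    mul_le_mul_of_nonneg_left hl (by linarith : (0 : ℝ) ≤ 2 * (1 - a))]

theorem norm_le_div_of_mul_norm_le {a l : ℝ} {γ₁ γ₂ : ℂ} (ha0 : 0 ≤ a) (ha1 : a < 1)
    (hl : 0 < l) (hkey : l * (a * (2 - a)) ≤ 2 * (1 - a) ^ 2)
    (h : l * ‖(2 - a) * (4 * γ₂) - a * (2 - a) * (2 * γ₁) ^ 2‖ ≤
      2 * (l ^ 2 - ‖(1 - a) * (2 * γ₁)‖ ^ 2)) :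
    ‖γ₂‖ ≤ l / (2 * (2 - a)) := by
  have h1 : ‖(2 - a) * (4 * γ₂) - a * (2 - a) * (2 * γ₁) ^ 2‖ =
      4 * (2 - a) * ‖γ₂ - a * γ₁ ^ 2‖ := by
    rw [show (2 - a) * (4 * γ₂) - a * (2 - a) * (2 * γ₁) ^ 2 =
      ((4 * (2 - a) : ℝ) : ℂ) * (γ₂ - a * γ₁ ^ 2) by push_cast; ring,
      norm_mul, norm_real, Real.norm_of_nonneg (by linarith)]
  have h2 : ‖(1 - a) * (2 * γ₁)‖ = 2 * (1 - a) * ‖γ₁‖ := by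
    rw [show (1 - a) * (2 * γ₁) = ((2 * (1 - a) : ℝ) : ℂ) * γ₁ by push_cast; ring,
      norm_mul, norm_real, Real.norm_of_nonneg (by linarith)]
  have h3 : ‖γ₂‖ ≤ ‖γ₂ - a * γ₁ ^ 2‖ + a * ‖γ₁‖ ^ 2 := by
    calc ‖γ₂‖ = ‖(γ₂ - a * γ₁ ^ 2) + a * γ₁ ^ 2‖ := by ring_nf
      _ ≤ _ := norm_add_le _ _
      _ = _ := by rw [norm_mul, norm_pow, norm_real, Real.norm_of_nonneg ha0]
  rw [h1, h2] at h
  rw [le_div_iff₀ (by linarith)]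
  refine le_of_mul_le_mul_left ?_ hl
  nlinarith [mul_le_mul_of_nonneg_right hkey (sq_nonneg ‖γ₁‖),
    mul_le_mul_of_nonneg_left h3 (by nlinarith : 0 ≤ 2 * (2 - a) * l)]

theorem stmt_1 (a l a₁ : ℝ) (ha : a ∈ Ioo (0:ℝ) 1) (hl : 0 < l)
    (ha₁ : a₁ ∈ Ioo (0:ℝ) 1 ∧ 7 * a₁ ^ 4 - 20 * a₁ ^ 3 + 24 * a₁ ^ 2 - 16 * a₁ + 4 = 0 ∧
      ∀ x ∈ Ioo (0:ℝ) 1, 7 * x ^ 4 - 20 * x ^ 3 + 24 * x ^ 2 - 16 * x + 4 = 0 → x = a₁)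
    (hcase : (a₁ ≤ a ∧ l ≤ 2 * (1 - a) ^ 2 / (a * (2 - a))) ∨
             (a ≤ a₁ ∧ l ≤ (1 - a) / Real.sqrt ((1 - a) ^ 2 + a ^ 2)))
    (f : ℂ → ℂ) (hf : f ∈ UClass a l) (γ : ℕ → ℂ) (hγ : IsLogCoeff f γ) :
    ‖γ 2‖ ≤ l / (2 * (2 - a)) := by
  obtain ⟨ha0, ha1⟩ := ha
  have hkey : l * (a * (2 - a)) ≤ 2 * (1 - a) ^ 2 := by
    rcases hcase with ⟨-, h⟩ | ⟨haa, h⟩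
    · rwa [le_div_iff₀ (by nlinarith)] at h
    · refine mul_le_of_le_div_sqrt ha1 hl.le ?_ h
      exact nonneg_of_le_of_unique_zero
        (P := fun x => 7 * x ^ 4 - 20 * x ^ 3 + 24 * x ^ 2 - 16 * x + 4)
        (by fun_prop) (by norm_num) ha0.le ha1 ha₁.2.2 haa
  have hL := hγ.analyticOnNhd_logQuot
  have hL0 := hL 0 (mem_ball_self one_pos)
  have hschwarz := mul_norm_iteratedDeriv_two_le_of_mapsTo_ball hl
    (fun z hz =>
      (hasDerivAt_quotPowDeriv (a := a) (hL z hz)).differentiableAt.differentiableWithinAt)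
    (by simpa only [quotPowDeriv_zero (logQuot_zero f)] using
      mapsTo_quotPowDeriv_of_mem_UClass hf hγ hl.le)
  rw [iteratedDeriv_two_quotPowDeriv_zero hL0 (logQuot_zero f),
    deriv_quotPowDeriv_zero hL0 (logQuot_zero f), hγ.deriv_logQuot_zero,
    hγ.iteratedDeriv_two_logQuot_zero] at hschwarz
  exact norm_le_div_of_mul_norm_le ha0.le ha1 hl hkey hschwarz
end

section
/- Let 0<α<1, λ⋆=(1−α)/√((1−α)²+α²), λ₁=2(1−α)²/(α(2−α)), and let α₁≈0.4825 be the unique real root of 7α⁴−20α³+24α²−16α+4=0 on (0,1). If α∈[α₁,1), λ₁≤λ≤λ⋆, and f∈U(α,λ), then the second logarithmic coefficient satisfies |γ₂| ≤ αλ²/(4(1−α)²). -/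
open Complex Metric Set

/-!
Write `f z = z * exp (S z)` with `S z = log (f z / z) = 2 ∑ γₙ zⁿ`. Then
`(z / f z) ^ (1 + α) * f' z = exp (-α S z) * (1 + z S' z) =: W z`, and `(W - 1) / λ` is a Schwarz
function: the principal power agrees with `exp (-(1 + α) S)` off the set `Im S = π`, which by the
open mapping theorem has empty interior, so `|W - 1| ≤ λ` holds on the whole disc by continuity.
Since `W'(0) = (1 - α) S'(0)` and `W''(0) = (2 - α) S''(0) - α (2 - α) S'(0)²` with `S''(0) = 4 γ₂`,
the second-order Schwarz lemma `λ |W''(0)| ≤ 2 (λ² - |W'(0)|²)` gives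
`4 (2 - α) |γ₂| ≤ 2 λ + (α (2 - α) - 2 (1 - α)² / λ) |S'(0)|²`. For `λ ≥ λ₁` the right side is
increasing in `|S'(0)|`, and the first-order bound `(1 - α) |S'(0)| ≤ λ` finishes the proof.
-/

open Filter Topology
open scoped Real NNReal ComplexConjugate

section PowerSeries

open FormalMultilinearSeries

theorem hasFPowerSeriesOnBall_ofScalarsSum {c : ℕ → ℂ} {r : ℝ≥0} (hr : 0 < r)
    (hc : ∀ z ∈ ball (0 : ℂ) r, Summable fun n ↦ c n * z ^ n) :
    HasFPowerSeriesOnBall (ofScalarsSum c) (ofScalars ℂ c) 0 r := by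
  have hrad : (r : ENNReal) ≤ (ofScalars ℂ c).radius := by
    refine ENNReal.le_of_forall_nnreal_lt fun t ht ↦ ?_
    have htr : ((t : ℝ) : ℂ) ∈ ball (0 : ℂ) r := by simpa using ht
    refine (ofScalars ℂ c).le_radius_of_tendsto (l := 0) ?_
    simpa [ofScalars_norm] using (hc _ htr).tendsto_atTop_zero.norm
  have hr' : (0 : ENNReal) < r := ENNReal.coe_pos.2 hr
  exact ((ofScalars ℂ c).hasFPowerSeriesOnBall (hr'.trans_le hrad)).mono hr' hrad

theorem HasFPowerSeriesAt.iteratedDeriv_eq_factorial_mul {𝕜 : Type*} [NontriviallyNormedField 𝕜]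
    [CompleteSpace 𝕜] [CharZero 𝕜] {f : 𝕜 → 𝕜} {c : ℕ → 𝕜} {x : 𝕜}
    (h : HasFPowerSeriesAt f (ofScalars 𝕜 c) x) (n : ℕ) :
    iteratedDeriv n f x = n.factorial * c n := by
  have := congrFun (ofScalars_series_injective (E := 𝕜) 𝕜
    (h.eq_formalMultilinearSeries h.analyticAt.hasFPowerSeriesAt)) n
  rw [this, mul_div_cancel₀ _ (by exact_mod_cast n.factorial_ne_zero)]

theorem IsLogCoeff.exists_analyticOnNhd_eq_log {f : ℂ → ℂ} {γ : ℕ → ℂ} (hγ : IsLogCoeff f γ) :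
    ∃ S : ℂ → ℂ, AnalyticOnNhd ℂ S (ball 0 1) ∧ S 0 = 0 ∧
      (∀ n, iteratedDeriv (n + 1) S 0 = 2 * (n + 1).factorial * γ (n + 1)) ∧
      ∀ z ∈ ball (0 : ℂ) 1, z ≠ 0 → S z = log (f z / z) := by
  set c : ℕ → ℂ := fun n ↦ if n = 0 then 0 else 2 * γ n
  have hsum : ∀ z ∈ ball (0 : ℂ) 1, z ≠ 0 → HasSum (fun n ↦ c n * z ^ n) (log (f z / z)) :=
    fun z hz hz0 ↦ by rw [← hasSum_nat_add_iff' 1]; simpa [c] using hγ z hz hz0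
  have hS : HasFPowerSeriesOnBall (ofScalarsSum c) (ofScalars ℂ c) 0 (1 : ℝ≥0) := by
    refine hasFPowerSeriesOnBall_ofScalarsSum one_pos fun z hz ↦ ?_
    rcases eq_or_ne z 0 with rfl | hz0
    · exact summable_of_ne_finset_zero (s := {0}) fun n hn ↦ by
        simp [c, Finset.mem_singleton.not.1 hn]
    · exact (hsum z (by simpa using hz) hz0).summable
  have hball : eball (0 : ℂ) (1 : ℝ≥0) = ball 0 1 := by
    rw [eball_coe, NNReal.coe_one]
  refine ⟨ofScalarsSum c, hball ▸ hS.analyticOnNhd, by simp [ofScalarsSum_zero, c],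
    fun n ↦ ?_, fun z hz hz0 ↦ ?_⟩
  · rw [hS.hasFPowerSeriesAt.iteratedDeriv_eq_factorial_mul, show c (n + 1) = 2 * γ (n + 1) from
      if_neg n.succ_ne_zero]
    ring
  · have hS_sum := hS.hasSum (y := z) (hball ▸ hz)
    rw [zero_add] at hS_sum
    refine hS_sum.unique ?_
    simpa [ofScalars_apply_eq, mul_comm] using hsum z hz hz0

end PowerSeries

theorem mul_norm_sub_le_norm_sq_sub_conj_mul {a b : ℂ} {r : ℝ} (ha : ‖a‖ ≤ r) (hb : ‖b‖ ≤ r) :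
    r * ‖a - b‖ ≤ ‖(r : ℂ) ^ 2 - conj b * a‖ := by
  have key : ‖(r : ℂ) ^ 2 - conj b * a‖ ^ 2 - (r * ‖a - b‖) ^ 2 =
      (r ^ 2 - ‖a‖ ^ 2) * (r ^ 2 - ‖b‖ ^ 2) := by
    rw [show (r : ℂ) ^ 2 = ((r ^ 2 : ℝ) : ℂ) by push_cast; ring]
    simp only [mul_pow, Complex.sq_norm, Complex.normSq_apply, Complex.sub_re, Complex.sub_im,
      Complex.mul_re, Complex.mul_im, Complex.conj_re, Complex.conj_im, Complex.ofReal_re,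
      Complex.ofReal_im]
    ring
  have hr : 0 ≤ r := (norm_nonneg a).trans ha
  have ha2 : ‖a‖ ^ 2 ≤ r ^ 2 := pow_le_pow_left₀ (norm_nonneg a) ha 2
  have hb2 : ‖b‖ ^ 2 ≤ r ^ 2 := pow_le_pow_left₀ (norm_nonneg b) hb 2
  refine pow_le_pow_iff_left₀ (by positivity) (norm_nonneg _) two_ne_zero |>.1 ?_
  nlinarith [mul_nonneg (sub_nonneg.2 ha2) (sub_nonneg.2 hb2)]

theorem mapsTo_sub_div_sq_sub_conj_mul {s : Set ℂ} {g : ℂ → ℂ} {t : ℂ} {r : ℝ} (hr : 0 < r)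
    (hg : MapsTo g s (closedBall 0 r)) (ht : ‖t‖ ≤ r) :
    MapsTo (fun z ↦ (g z - t) / ((r : ℂ) ^ 2 - conj t * g z)) s (closedBall 0 r⁻¹) := by
  intro z hz
  rw [mem_closedBall_zero_iff, norm_div]
  rcases eq_or_ne ((r : ℂ) ^ 2 - conj t * g z) 0 with h | h
  · simpa [h] using hr.le
  rw [div_le_iff₀ (norm_pos_iff.2 h), ← div_eq_inv_mul, le_div_iff₀ hr, mul_comm]
  exact mul_norm_sub_le_norm_sq_sub_conj_mul (by simpa using hg hz) ht

theorem mul_norm_deriv_le_sq_sub_sq_norm_of_mapsTo_ball {g : ℂ → ℂ} {r : ℝ}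
    (hd : DifferentiableOn ℂ g (ball 0 1)) (hmaps : MapsTo g (ball 0 1) (closedBall 0 r)) :
    r * ‖deriv g 0‖ ≤ r ^ 2 - ‖g 0‖ ^ 2 := by
  have h0 : (0 : ℂ) ∈ ball (0 : ℂ) 1 := mem_ball_self one_pos
  have hg : ∀ z ∈ ball (0 : ℂ) 1, ‖g z‖ ≤ r := fun z hz ↦ by simpa using hmaps hz
  set t := g 0
  rcases (hg 0 h0).lt_or_eq with ht | ht
  · have hr : 0 < r := (norm_nonneg t).trans_lt ht
    have hden : ∀ z ∈ ball (0 : ℂ) 1, (r : ℂ) ^ 2 - conj t * g z ≠ 0 := by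
      intro z hz h
      have : ‖conj t * g z‖ < r ^ 2 := by
        rw [norm_mul, Complex.norm_conj]
        nlinarith [norm_nonneg t, norm_nonneg (g z), hg z hz]
      rw [← sub_eq_zero.1 h] at this
      simp [abs_of_pos hr] at this
    set ψ := fun z ↦ (g z - t) / ((r : ℂ) ^ 2 - conj t * g z)
    have hψd : DifferentiableOn ℂ ψ (ball 0 1) :=
      (hd.sub_const t).div ((differentiableOn_const _).sub (hd.const_mul _)) hden
    have hψmaps : MapsTo ψ (ball 0 1) (closedBall (ψ 0) r⁻¹) := by
      rw [show ψ 0 = 0 by simp [ψ, t]]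
      exact mapsTo_sub_div_sq_sub_conj_mul hr hmaps ht.le
    have hg' : HasDerivAt g (deriv g 0) 0 :=
      (hd.differentiableAt (ball_mem_nhds 0 one_pos)).hasDerivAt
    have hψ' : deriv ψ 0 = deriv g 0 / ((r : ℂ) ^ 2 - conj t * t) := by
      have : HasDerivAt ψ _ 0 :=
        (hg'.sub_const t).div ((hasDerivAt_const _ _).sub (hg'.const_mul _)) (hden 0 h0)
      have hden0 : (r : ℂ) ^ 2 - conj t * t ≠ 0 := hden 0 h0
      rw [this.deriv, show g 0 = t from rfl, sub_self, zero_mul, sub_zero]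
      field_simp
    have hnorm : ‖(r : ℂ) ^ 2 - conj t * t‖ = r ^ 2 - ‖t‖ ^ 2 := by
      rw [mul_comm, Complex.mul_conj, ← Complex.sq_norm]
      norm_cast
      exact Real.norm_of_nonneg (by nlinarith [norm_nonneg t])
    have := Complex.norm_deriv_le_div_of_mapsTo_ball hψd hψmaps one_pos
    rw [hψ', norm_div, hnorm, div_one, div_le_iff₀ (by nlinarith [norm_nonneg t])] at this
    field_simp at this
    linarith
  · have hmax : IsLocalMax (‖g ·‖) 0 :=
      eventually_of_mem (ball_mem_nhds 0 one_pos) fun z hz ↦ (hg z hz).trans ht.ge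
    have hconst : g =ᶠ[𝓝 0] fun _ ↦ t := Complex.eventually_eq_of_isLocalMax_norm
      (eventually_of_mem (ball_mem_nhds 0 one_pos) fun z hz ↦
        hd.differentiableAt (isOpen_ball.mem_nhds hz)) hmax
    rw [hconst.deriv_eq, deriv_const, norm_zero, mul_zero, ht, sub_self]

theorem mul_norm_iteratedDeriv_two_le_of_mapsTo_ball {ω : ℂ → ℂ} {r : ℝ}
    (hd : DifferentiableOn ℂ ω (ball 0 1)) (hmaps : MapsTo ω (ball 0 1) (closedBall (ω 0) r)) :
    r * ‖iteratedDeriv 2 ω 0‖ ≤ 2 * (r ^ 2 - ‖deriv ω 0‖ ^ 2) := by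
  set g := dslope ω 0
  have hgd : DifferentiableOn ℂ g (ball 0 1) :=
    (differentiableOn_dslope (ball_mem_nhds 0 one_pos)).2 hd
  have hgmaps : MapsTo g (ball 0 1) (closedBall 0 r) := fun z hz ↦ by
    simpa using Complex.norm_dslope_le_div_of_mapsTo_ball hd hmaps hz
  have hω : ω = fun z ↦ ω 0 + z * g z := funext fun z ↦ by
    have h := sub_smul_dslope ω 0 z
    rw [sub_zero, smul_eq_mul] at h
    linear_combination -h
  have hgc : ContDiffAt ℂ 2 g 0 :=
    (hgd.analyticAt (ball_mem_nhds 0 one_pos)).contDiffAt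
  have h2 : iteratedDeriv 2 ω 0 = 2 * deriv g 0 := by
    rw [hω, iteratedDeriv_const_add two_pos]
    refine (iteratedDeriv_fun_mul (f := id) contDiffAt_id hgc).trans ?_
    simp [Finset.sum_range_succ, iteratedDeriv_id]
  have := mul_norm_deriv_le_sq_sub_sq_norm_of_mapsTo_ball hgd hgmaps
  rw [show g 0 = deriv ω 0 from dslope_same ω 0] at this
  rw [h2, norm_mul, Complex.norm_ofNat]
  linarith

theorem AnalyticOnNhd.mapsTo_of_im_ne {X : Type*} [TopologicalSpace X] {U : Set ℂ}
    {S : ℂ → ℂ} {W : ℂ → X} {K : Set X} {c : ℝ} {z₁ : ℂ} (hS : AnalyticOnNhd ℂ S U)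
    (hU : IsOpen U) (hUc : IsPreconnected U) (hW : ContinuousOn W U) (hK : IsClosed K)
    (hz₁ : z₁ ∈ U) (hS₁ : (S z₁).im ≠ c) (h : ∀ z ∈ U, (S z).im ≠ c → W z ∈ K) :
    MapsTo W U K := by
  intro z₀ hz₀
  by_contra hWz₀
  set T := U ∩ W ⁻¹' Kᶜ
  have hT : IsOpen T := hW.isOpen_inter_preimage hU hK.isOpen_compl
  have hST : S '' T ⊆ im ⁻¹' {c} := by
    rintro _ ⟨z, ⟨hzU, hzK⟩, rfl⟩
    by_contra hne
    exact hzK (h z hzU hne)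
  rcases hS.is_constant_or_isOpen hUc with ⟨w, hw⟩ | hopen
  · exact hS₁ (by rw [hw z₁ hz₁, ← hw z₀ hz₀]; exact hST ⟨z₀, ⟨hz₀, hWz₀⟩, rfl⟩)
  · have := interior_maximal hST (hopen T inter_subset_left hT)
    rw [Complex.interior_preimage_im, interior_singleton] at this
    exact this ⟨z₀, ⟨hz₀, hWz₀⟩, rfl⟩

theorem UClass.apply_ne_zero {a l : ℝ} {f : ℂ → ℂ} (hf : f ∈ UClass a l) (ha : a ≠ -1)
    (hl : l ≤ 1) {z : ℂ} (hz : z ∈ ball (0 : ℂ) 1) (hz0 : z ≠ 0) : f z ≠ 0 := by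
  intro hfz
  have hpow : (1 : ℂ) + a ≠ 0 := by
    norm_cast
    intro h
    exact ha (by linarith)
  have := hf.2.2.2 z hz hz0
  rw [hfz, div_zero, zero_cpow hpow, zero_mul, zero_sub, norm_neg, norm_one] at this
  linarith

/-- For `f z = z * exp (S z)` this is `(z / f z) ^ (1 + a) * f' z`, up to the branch of the
power. -/
noncomputable def powMulDeriv (a : ℂ) (S : ℂ → ℂ) (z : ℂ) : ℂ :=
  cexp (-a * S z) * (1 + z * deriv S z)

section powMulDeriv

variable {a : ℂ} {S : ℂ → ℂ}

theorem hasDerivAt_powMulDeriv {z : ℂ} (hS : AnalyticAt ℂ S z) :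
    HasDerivAt (powMulDeriv a S) (cexp (-a * S z) *
      (deriv S z - a * deriv S z * (1 + z * deriv S z) + z * deriv (deriv S) z)) z := by
  have hE := (hS.differentiableAt.hasDerivAt.const_mul (-a)).cexp
  have hQ := (hasDerivAt_id z).mul hS.deriv.differentiableAt.hasDerivAt |>.const_add 1
  refine HasDerivAt.congr_deriv (f := powMulDeriv a S) (hE.mul hQ) ?_
  simp only [id]
  ring

theorem AnalyticOnNhd.powMulDeriv {U : Set ℂ} (hS : AnalyticOnNhd ℂ S U) :
    AnalyticOnNhd ℂ (powMulDeriv a S) U := fun z hz ↦ by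
  have := hS z hz
  have := (hS z hz).deriv
  unfold _root_.powMulDeriv
  fun_prop

theorem deriv_powMulDeriv_zero (hS : AnalyticAt ℂ S 0) (hS0 : S 0 = 0) :
    deriv (powMulDeriv a S) 0 = (1 - a) * deriv S 0 := by
  rw [(hasDerivAt_powMulDeriv hS).deriv, hS0]
  simp only [mul_zero, exp_zero, zero_mul, add_zero, mul_one, one_mul]
  ring

theorem iteratedDeriv_two_powMulDeriv_zero (hS : AnalyticAt ℂ S 0) (hS0 : S 0 = 0) :
    iteratedDeriv 2 (powMulDeriv a S) 0 =
      (2 - a) * iteratedDeriv 2 S 0 + (a ^ 2 - 2 * a) * deriv S 0 ^ 2 := by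
  have hderiv : deriv (powMulDeriv a S) =ᶠ[𝓝 0] fun z ↦ cexp (-a * S z) *
      (deriv S z - a * deriv S z * (1 + z * deriv S z) + z * deriv (deriv S) z) :=
    hS.eventually_analyticAt.mono fun z hz ↦ (hasDerivAt_powMulDeriv hz).deriv
  have hS₁ := hS.differentiableAt.hasDerivAt
  have hS₂ := hS.deriv.differentiableAt.hasDerivAt
  have hS₃ := hS.deriv.deriv.differentiableAt.hasDerivAt
  have hE := (hS₁.const_mul (-a)).cexp
  have hP := ((hS₂.sub ((hS₂.const_mul a).mul
    (((hasDerivAt_id 0).mul hS₂).const_add 1))).add ((hasDerivAt_id 0).mul hS₃))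
  have hG : HasDerivAt (fun z ↦ cexp (-a * S z) *
      (deriv S z - a * deriv S z * (1 + z * deriv S z) + z * deriv (deriv S) z)) _ 0 := hE.mul hP
  simp only [iteratedDeriv_succ, iteratedDeriv_zero]
  rw [hderiv.deriv_eq, hG.deriv, hS0]
  simp only [mul_zero, exp_zero, neg_mul, mul_neg, one_mul, zero_mul, add_zero, mul_one,
    Pi.mul_apply, id_eq]
  ring

end powMulDeriv

theorem UClass.eqOn_mul_exp {a l : ℝ} {f S : ℂ → ℂ} (hf : f ∈ UClass a l) (ha : a ≠ -1)
    (hl : l ≤ 1) (hSf : ∀ z ∈ ball (0 : ℂ) 1, z ≠ 0 → S z = log (f z / z)) :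
    EqOn f (fun z ↦ z * cexp (S z)) (ball 0 1) := by
  intro z hz
  rcases eq_or_ne z 0 with rfl | hz0
  · simp [hf.2.1]
  · show f z = z * cexp (S z)
    rw [hSf z hz hz0, exp_log (div_ne_zero (UClass.apply_ne_zero hf ha hl hz hz0) hz0),
      mul_div_cancel₀ _ hz0]

theorem UClass.mapsTo_powMulDeriv {a l : ℝ} {f S : ℂ → ℂ} (hf : f ∈ UClass a l) (ha : a ≠ -1)
    (hl₀ : 0 ≤ l) (hl : l ≤ 1) (hS : AnalyticOnNhd ℂ S (ball 0 1)) (hS0 : S 0 = 0)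
    (hSf : ∀ z ∈ ball (0 : ℂ) 1, z ≠ 0 → S z = log (f z / z)) :
    MapsTo (powMulDeriv a S) (ball 0 1) (closedBall 1 l) := by
  have hfS := UClass.eqOn_mul_exp hf ha hl hSf
  have hf' : ∀ z ∈ ball (0 : ℂ) 1, deriv f z = cexp (S z) * (1 + z * deriv S z) := by
    intro z hz
    have hev : f =ᶠ[𝓝 z] fun w ↦ w * cexp (S w) :=
      eventually_of_mem (isOpen_ball.mem_nhds hz) hfS
    have : HasDerivAt (fun w ↦ w * cexp (S w)) _ z :=
      (hasDerivAt_id z).mul (hS z hz).differentiableAt.hasDerivAt.cexp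
    rw [hev.deriv_eq, this.deriv]
    simp only [id]
    ring
  refine hS.mapsTo_of_im_ne (c := π) isOpen_ball (convex_ball 0 1).isPreconnected
    hS.powMulDeriv.continuousOn
    isClosed_closedBall (mem_ball_self one_pos) (by simp [hS0, Real.pi_ne_zero.symm]) ?_
  intro z hz him
  rcases eq_or_ne z 0 with rfl | hz0
  · simp [powMulDeriv, hS0, hl₀]
  have hzf : z / f z = cexp (-S z) := by rw [hfS hz, exp_neg, div_mul_cancel_left₀ hz0]
  have hpow : cexp (-S z) ^ ((1 : ℂ) + a) = cexp (-S z * (1 + a)) := by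
    have him' : -π ≤ (S z).im := by
      rw [hSf z hz hz0, log_im]
      exact (neg_pi_lt_arg _).le
    have him'' : (S z).im < π := by
      refine lt_of_le_of_ne ?_ him
      rw [hSf z hz hz0, log_im]
      exact arg_le_pi _
    rw [cpow_def_of_ne_zero (exp_ne_zero _), log_exp] <;> simp only [neg_im] <;> linarith
  have := hf.2.2.2 z hz hz0
  rw [hzf, hpow, hf' z hz, ← mul_assoc, ← exp_add] at this
  rw [mem_closedBall, dist_eq_norm, powMulDeriv, show -(a : ℂ) * S z = -S z * (1 + a) + S z by ring]
  exact this.le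

theorem schwarz_bounds_of_mapsTo_powMulDeriv {a l : ℝ} {S : ℂ → ℂ} (ha₀ : 0 ≤ a) (ha₁ : a ≤ 1)
    (hS : AnalyticOnNhd ℂ S (ball 0 1)) (hS0 : S 0 = 0)
    (hmaps : MapsTo (powMulDeriv a S) (ball 0 1) (closedBall 1 l)) :
    (1 - a) * ‖deriv S 0‖ ≤ l ∧
      l * ((2 - a) * ‖iteratedDeriv 2 S 0‖ - a * (2 - a) * ‖deriv S 0‖ ^ 2) ≤
        2 * (l ^ 2 - ((1 - a) * ‖deriv S 0‖) ^ 2) := by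
  have hS₀ := hS 0 (mem_ball_self one_pos)
  rw [← show powMulDeriv a S 0 = 1 by simp [powMulDeriv, hS0]] at hmaps
  have hl : 0 ≤ l := by simpa using hmaps (mem_ball_self one_pos)
  have hd : DifferentiableOn ℂ (powMulDeriv a S) (ball 0 1) := hS.powMulDeriv.differentiableOn
  have hW₁ : ‖deriv (powMulDeriv a S) 0‖ = (1 - a) * ‖deriv S 0‖ := by
    rw [deriv_powMulDeriv_zero hS₀ hS0, norm_mul,
      show 1 - (a : ℂ) = ((1 - a : ℝ) : ℂ) by push_cast; rfl, Complex.norm_of_nonneg (by linarith)]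
  have hW₂ : (2 - a) * ‖iteratedDeriv 2 S 0‖ - a * (2 - a) * ‖deriv S 0‖ ^ 2 ≤
      ‖iteratedDeriv 2 (powMulDeriv a S) 0‖ := by
    rw [iteratedDeriv_two_powMulDeriv_zero hS₀ hS0]
    refine le_of_eq_of_le ?_ (norm_sub_le_norm_add _ _)
    rw [show 2 - (a : ℂ) = ((2 - a : ℝ) : ℂ) by push_cast; rfl,
      show (a : ℂ) ^ 2 - 2 * a = -((a * (2 - a) : ℝ) : ℂ) by push_cast; ring,
      norm_mul, norm_mul, norm_neg, norm_pow, Complex.norm_of_nonneg (by linarith),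
      Complex.norm_of_nonneg (by nlinarith)]
  have h₁ := Complex.norm_deriv_le_div_of_mapsTo_ball hd hmaps one_pos
  have h₂ := mul_norm_iteratedDeriv_two_le_of_mapsTo_ball hd hmaps
  rw [hW₁, div_one] at h₁
  rw [hW₁] at h₂
  exact ⟨h₁, (mul_le_mul_of_nonneg_left hW₂ hl).trans h₂⟩

theorem le_of_schwarz_bounds {a l x g : ℝ} (ha : a ∈ Ioo (0 : ℝ) 1) (hl : 0 < l)
    (hl₁ : 2 * (1 - a) ^ 2 / (a * (2 - a)) ≤ l) (hx : 0 ≤ x) (h₁ : (1 - a) * x ≤ l)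
    (h₂ : l * ((2 - a) * (4 * g) - a * (2 - a) * x ^ 2) ≤ 2 * (l ^ 2 - ((1 - a) * x) ^ 2)) :
    g ≤ a * l ^ 2 / (4 * (1 - a) ^ 2) := by
  obtain ⟨ha0, ha1⟩ := ha
  rw [div_le_iff₀ (by nlinarith)] at hl₁
  have hx2 : ((1 - a) * x) ^ 2 ≤ l ^ 2 := pow_le_pow_left₀ (by nlinarith) h₁ 2
  rw [le_div_iff₀ (by nlinarith)]
  -- The bound on `g` from `h₂` increases with `x ^ 2` as `l ≥ λ₁`, so `(1 - a) * x = l` is extreme.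
  nlinarith [mul_nonneg (sub_nonneg.2 hl₁) (sub_nonneg.2 hx2), mul_pos hl (sub_pos.2 ha1)]

theorem stmt_2_general (a l : ℝ) (ha : a ∈ Ioo (0:ℝ) 1) (hl : 0 < l)
    (hl₁ : 2 * (1 - a) ^ 2 / (a * (2 - a)) ≤ l)
    (hls : l ≤ (1 - a) / Real.sqrt ((1 - a) ^ 2 + a ^ 2))
    (f : ℂ → ℂ) (hf : f ∈ UClass a l) (γ : ℕ → ℂ) (hγ : IsLogCoeff f γ) :
    ‖γ 2‖ ≤ a * l ^ 2 / (4 * (1 - a) ^ 2) := by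
  obtain ⟨S, hS, hS0, hSγ, hSf⟩ := hγ.exists_analyticOnNhd_eq_log
  have hl1 : l ≤ 1 := hls.trans <| div_le_one_of_le₀
    (Real.le_sqrt_of_sq_le (by nlinarith)) (Real.sqrt_nonneg _)
  have hmaps := UClass.mapsTo_powMulDeriv hf (by linarith [ha.1]) hl.le hl1 hS hS0 hSf
  obtain ⟨h₁, h₂⟩ := schwarz_bounds_of_mapsTo_powMulDeriv ha.1.le ha.2.le hS hS0 hmaps
  have hS₂ : ‖iteratedDeriv 2 S 0‖ = 4 * ‖γ 2‖ := by
    rw [hSγ 1, norm_mul]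
    norm_num [Nat.factorial]
  rw [hS₂] at h₂
  exact le_of_schwarz_bounds ha hl hl₁ (norm_nonneg _) h₁ h₂

theorem stmt_2 (a l a₁ : ℝ) (ha : a ∈ Ioo (0:ℝ) 1) (hl : 0 < l)
    (ha₁ : a₁ ∈ Ioo (0:ℝ) 1 ∧ 7 * a₁ ^ 4 - 20 * a₁ ^ 3 + 24 * a₁ ^ 2 - 16 * a₁ + 4 = 0 ∧
      ∀ x ∈ Ioo (0:ℝ) 1, 7 * x ^ 4 - 20 * x ^ 3 + 24 * x ^ 2 - 16 * x + 4 = 0 → x = a₁)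
    (haa₁ : a₁ ≤ a)
    (hl₁ : 2 * (1 - a) ^ 2 / (a * (2 - a)) ≤ l)
    (hls : l ≤ (1 - a) / Real.sqrt ((1 - a) ^ 2 + a ^ 2))
    (f : ℂ → ℂ) (hf : f ∈ UClass a l) (γ : ℕ → ℂ) (hγ : IsLogCoeff f γ) :
    ‖γ 2‖ ≤ a * l ^ 2 / (4 * (1 - a) ^ 2) :=
  stmt_2_general a l ha hl hl₁ hls f hf γ hγ
end

section
/- The polynomial q(α)=4−12α−19α²+14α³−2α⁴ has a unique real root α_{1/2}≈0.2512 on the interval (0,1), and for α∈(0,1) the inequality (1−α)(2−α)/(2α(3−α)) ≤ (1−α)/√((1−α)²+α²) holds if and only if q(α) ≤ 0, i.e. if and only if α ≥ α_{1/2}. -/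
/-!
`q` is strictly decreasing on `[0, 1]`, since `q' = -12 - 38x + 42x² - 8x³ < 0` there, and it
changes sign on `[0.2505, 0.2519]`; this gives the unique root `α_{1/2}` and `q α ≤ 0 ↔ α_{1/2} ≤ α`.
After cancelling `1 - α`, the comparison `λ_{1/2} ≤ λ⋆` reads `(2 - α) √((1 - α)² + α²) ≤ 2α(3 - α)`
between nonnegative numbers, and squaring it gives `q α ≤ 0` because
`q α = (2 - α)² ((1 - α)² + α²) - (2α(3 - α))²`.
-/

open Set

noncomputable def q (x : ℝ) : ℝ := 4 - 12 * x - 19 * x ^ 2 + 14 * x ^ 3 - 2 * x ^ 4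

lemma hasDerivAt_q (x : ℝ) : HasDerivAt q (-12 - 38 * x + 42 * x ^ 2 - 8 * x ^ 3) x := by
  unfold q
  have h := (((((hasDerivAt_id x).const_mul 12).const_sub 4).sub
    ((hasDerivAt_pow 2 x).const_mul 19)).add ((hasDerivAt_pow 3 x).const_mul 14)).sub
    ((hasDerivAt_pow 4 x).const_mul 2)
  exact h.congr_deriv (by norm_num; ring)

lemma continuous_q : Continuous q := by
  unfold q
  fun_prop

lemma q_strictAntiOn : StrictAntiOn q (Icc 0 1) := by
  refine strictAntiOn_of_deriv_neg (convex_Icc 0 1) continuous_q.continuousOn fun x hx => ?_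
  rw [interior_Icc] at hx
  rw [(hasDerivAt_q x).deriv]
  nlinarith [hx.1, hx.2, mul_pos hx.1 hx.1]

lemma exists_q_eq_zero : ∃ a ∈ Ioo (0.2505 : ℝ) 0.2519, q a = 0 :=
  intermediate_value_Ioo' (by norm_num) continuous_q.continuousOn
    (by constructor <;> norm_num [q])

lemma q_eq_sq_sub_sq (α : ℝ) :
    q α = ((2 - α) * √((1 - α) ^ 2 + α ^ 2)) ^ 2 - (2 * α * (3 - α)) ^ 2 := by
  rw [mul_pow, Real.sq_sqrt (by positivity), q]
  ring

lemma div_le_div_sqrt_iff_q_nonpos {α : ℝ} (hα : α ∈ Ioo (0 : ℝ) 1) :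
    (1 - α) * (2 - α) / (2 * α * (3 - α)) ≤ (1 - α) / √((1 - α) ^ 2 + α ^ 2) ↔ q α ≤ 0 := by
  obtain ⟨h0, h1⟩ := hα
  have hden : 0 < 2 * α * (3 - α) := by nlinarith
  have hsqrt : 0 < √((1 - α) ^ 2 + α ^ 2) := by positivity
  rw [div_le_div_iff₀ hden hsqrt, mul_assoc, mul_le_mul_iff_right₀ (by linarith),
    q_eq_sq_sub_sq, sub_nonpos,
    pow_le_pow_iff_left₀ (mul_nonneg (by linarith) hsqrt.le) hden.le two_ne_zero, mul_comm]

theorem stmt_11 :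
    ∃ ah : ℝ, ah ∈ Ioo (0:ℝ) 1 ∧
      4 - 12 * ah - 19 * ah ^ 2 + 14 * ah ^ 3 - 2 * ah ^ 4 = 0 ∧
      (∀ x ∈ Ioo (0:ℝ) 1, 4 - 12 * x - 19 * x ^ 2 + 14 * x ^ 3 - 2 * x ^ 4 = 0 → x = ah) ∧
      |ah - 0.2512| < 0.001 ∧
      ∀ α ∈ Ioo (0:ℝ) 1,
        (((1 - α) * (2 - α) / (2 * α * (3 - α)) ≤ (1 - α) / Real.sqrt ((1 - α) ^ 2 + α ^ 2)) ↔
          4 - 12 * α - 19 * α ^ 2 + 14 * α ^ 3 - 2 * α ^ 4 ≤ 0) ∧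
        ((4 - 12 * α - 19 * α ^ 2 + 14 * α ^ 3 - 2 * α ^ 4 ≤ 0) ↔ ah ≤ α) := by
  obtain ⟨ah, ⟨hlo, hhi⟩, hq⟩ := exists_q_eq_zero
  have hah : ah ∈ Icc (0 : ℝ) 1 := ⟨by linarith, by linarith⟩
  refine ⟨ah, ⟨by linarith, by linarith⟩, hq, fun x hx hqx => ?_,
    abs_lt.2 ⟨by linarith, by linarith⟩, fun α hα => ⟨div_le_div_sqrt_iff_q_nonpos hα, ?_⟩⟩
  · exact q_strictAntiOn.injOn (Ioo_subset_Icc_self hx) hah (hqx.trans hq.symm)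
  · have h := q_strictAntiOn.le_iff_ge (Ioo_subset_Icc_self hα) hah
    rwa [hq] at h
end

section
/- The polynomial r(α)=3−9α+9α²−5α³ has a unique real root α_ν≈0.5337 on the interval (0,1), and for α∈(0,1) the inequality √(3(1−α)³/(α²(3−α))) ≤ (1−α)/√((1−α)²+α²) holds if and only if r(α) ≤ 0, i.e. if and only if α ≥ α_ν. -/
/-! The comparison `λ_ν ≤ λ⋆` is one between square roots of positive quantities; squaring and
clearing the positive denominators `α²(3 - α)` and `(1 - α)² + α²` leaves
`3(1 - α)((1 - α)² + α²) ≤ α²(3 - α)`, which after dividing by `1 - α > 0` is exactly `r(α) ≤ 0`.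
The cubic `r` is strictly decreasing, since `r x - r y = (y - x)(5(x² + xy + y²) - 9(x + y) + 9)`
with a positive second factor, so it has exactly one root, which lies in `(0.5327, 0.5347)` where
`r` changes sign. -/

open Set

noncomputable section

namespace NuThreshold

def r (x : ℝ) : ℝ := 3 - 9 * x + 9 * x ^ 2 - 5 * x ^ 3

def lambdaStar (α : ℝ) : ℝ := (1 - α) / Real.sqrt ((1 - α) ^ 2 + α ^ 2)

def lambdaNu (α : ℝ) : ℝ := Real.sqrt (3 * (1 - α) ^ 3 / (α ^ 2 * (3 - α)))

theorem r_strictAnti : StrictAnti r := by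
  intro x y hxy
  have hfactor : 0 < 5 * (x ^ 2 + x * y + y ^ 2) - 9 * (x + y) + 9 := by
    nlinarith [sq_nonneg (x + y - 9 / 5), sq_nonneg (x - y)]
  have hdiff : r x - r y = (y - x) * (5 * (x ^ 2 + x * y + y ^ 2) - 9 * (x + y) + 9) := by
    unfold r; ring
  nlinarith [mul_pos (sub_pos.mpr hxy) hfactor]

theorem exists_root_mem_Ioo : ∃ a ∈ Ioo (0.5327 : ℝ) 0.5347, r a = 0 := by
  have hsign : (0 : ℝ) ∈ Ioo (r 0.5347) (r 0.5327) := by unfold r; norm_num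
  exact intermediate_value_Ioo' (by norm_num) (by unfold r; fun_prop) hsign

theorem lambdaNu_le_lambdaStar_iff {α : ℝ} (hα : α ∈ Ioo (0 : ℝ) 1) :
    lambdaNu α ≤ lambdaStar α ↔ r α ≤ 0 := by
  obtain ⟨hα0, hα1⟩ := hα
  have h1α : 0 < 1 - α := by linarith
  have hD : 0 < (1 - α) ^ 2 + α ^ 2 := by positivity
  have hstar : lambdaStar α = Real.sqrt ((1 - α) ^ 2 / ((1 - α) ^ 2 + α ^ 2)) := by
    rw [lambdaStar, Real.sqrt_div (sq_nonneg _), Real.sqrt_sq h1α.le]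
  have hcleared : 3 * (1 - α) ^ 3 * ((1 - α) ^ 2 + α ^ 2) - (1 - α) ^ 2 * (α ^ 2 * (3 - α)) =
      (1 - α) ^ 2 * r α := by
    unfold r; ring
  rw [hstar, lambdaNu, Real.sqrt_le_sqrt_iff (by positivity),
    div_le_div_iff₀ (by nlinarith) hD, ← sub_nonpos, hcleared]
  simpa using mul_le_mul_iff_of_pos_left (b := r α) (c := 0) (pow_pos h1α 2)

end NuThreshold

open NuThreshold in
theorem stmt_12 :
    ∃ aν : ℝ, aν ∈ Ioo (0:ℝ) 1 ∧
      3 - 9 * aν + 9 * aν ^ 2 - 5 * aν ^ 3 = 0 ∧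
      (∀ x ∈ Ioo (0:ℝ) 1, 3 - 9 * x + 9 * x ^ 2 - 5 * x ^ 3 = 0 → x = aν) ∧
      |aν - 0.5337| < 0.001 ∧
      ∀ α ∈ Ioo (0:ℝ) 1,
        ((Real.sqrt (3 * (1 - α) ^ 3 / (α ^ 2 * (3 - α))) ≤
            (1 - α) / Real.sqrt ((1 - α) ^ 2 + α ^ 2)) ↔
          3 - 9 * α + 9 * α ^ 2 - 5 * α ^ 3 ≤ 0) ∧
        ((3 - 9 * α + 9 * α ^ 2 - 5 * α ^ 3 ≤ 0) ↔ aν ≤ α) := by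
  obtain ⟨a, ⟨ha_lo, ha_hi⟩, hra⟩ := exists_root_mem_Ioo
  refine ⟨a, ⟨by linarith, by linarith⟩, hra,
    fun x _ hrx => r_strictAnti.injective (hrx.trans hra.symm), abs_lt.mpr ⟨by linarith, by linarith⟩, fun α hα => ⟨lambdaNu_le_lambdaStar_iff hα, ?_⟩⟩
  change r α ≤ 0 ↔ a ≤ α
  rw [← hra]
  exact r_strictAnti.le_iff_ge
end
end

section
/- Let α_ν≈0.5337 be the unique real root of 3−9α+9α²−5α³=0 on (0,1) and α₂≈0.9555 the unique real root of 11α²−44α+32=0 on (0,1). The function g(α)=√(3(1−α)(3−α))/(2−α) is decreasing on the interval (α_ν,α₂); consequently, for every α∈[α_ν,α₂] and every λ with (1−α)(2−α)/(2α(3−α)) ≤ λ ≤ √(3(1−α)³/(α²(3−α))), the quantities μ = α(3−α)λ/((1−α)(2−α)) and ν = α²(3−α)λ²/(3(1−α)³) satisfy 1/2 ≤ μ ≤ g(α_ν) < 1.27 and (4/27)(1+μ)³ − (1+μ) < 0 < ν ≤ 1. -/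
/-! The parameters μ and ν grow with λ, and the endpoints of the λ-interval are exactly where
μ = 1/2, μ = g(α) and ν = 1. Since (1 − α)(3 − α) = (2 − α)² − 1, we have g(α)² = 3 − 3/(2 − α)²,
so g is decreasing on α ≤ 1 and μ ≤ g(α) ≤ g(α_ν). The cubic defining α_ν is decreasing and
positive at 0.532, so α_ν > 0.532 and g(α_ν) < g(0.532) < 1.27. Finally (4/27)t³ − t < 0 for
0 < t < 3√3/2, and t = 1 + μ < 2.27. -/

open Set

namespace ThirdLogCoeff

noncomputable def g (x : ℝ) : ℝ := √(3 * (1 - x) * (3 - x)) / (2 - x)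

noncomputable def mu (α l : ℝ) : ℝ := α * (3 - α) * l / ((1 - α) * (2 - α))

noncomputable def nu (α l : ℝ) : ℝ := α ^ 2 * (3 - α) * l ^ 2 / (3 * (1 - α) ^ 3)

noncomputable def lamHalf (α : ℝ) : ℝ := (1 - α) * (2 - α) / (2 * α * (3 - α))

noncomputable def lamNu (α : ℝ) : ℝ := √(3 * (1 - α) ^ 3 / (α ^ 2 * (3 - α)))

lemma g_eq_sqrt {x : ℝ} (hx : x ≤ 1) : g x = √(3 - 3 / (2 - x) ^ 2) := by
  have h2 : 0 < 2 - x := by linarith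
  rw [g, show 3 - 3 / (2 - x) ^ 2 = 3 * (1 - x) * (3 - x) / (2 - x) ^ 2 by field_simp; ring,
    Real.sqrt_div' _ (sq_nonneg _), Real.sqrt_sq h2.le]

lemma strictAntiOn_g : StrictAntiOn g (Iic 1) := by
  intro x hx y hy hxy
  rw [g_eq_sqrt hx, g_eq_sqrt hy]
  have hy1 : 1 ≤ 2 - y := by linarith [mem_Iic.1 hy]
  have hsq : (2 - y) ^ 2 < (2 - x) ^ 2 := by nlinarith
  apply Real.sqrt_lt_sqrt
  · have : 3 / (2 - y) ^ 2 ≤ 3 := div_le_self zero_le_three (one_le_pow₀ hy1)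
    linarith
  · linarith [div_lt_div_of_pos_left zero_lt_three (by positivity) hsq]

lemma g_lt_of_lt {x : ℝ} (hx : 133 / 250 < x) (hx1 : x ≤ 1) : g x < 1.27 := by
  refine (strictAntiOn_g (by norm_num) hx1 hx).trans ?_
  rw [g, div_lt_iff₀ (by norm_num), Real.sqrt_lt' (by norm_num)]
  norm_num

lemma cubic_strictAnti : StrictAnti fun x : ℝ => 3 - 9 * x + 9 * x ^ 2 - 5 * x ^ 3 := by
  intro x y hxy
  -- p x - p y = (y - x) * (5 (x² + x y + y²) - 9 (x + y) + 9), and the second factor is ≥ 18/5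
  have hfactor : 0 < 5 * (x ^ 2 + x * y + y ^ 2) - 9 * (x + y) + 9 := by
    nlinarith [sq_nonneg (x - y), sq_nonneg (x + y - 6 / 5)]
  nlinarith [mul_pos (sub_pos.2 hxy) hfactor]

lemma lt_of_cubic_root {a : ℝ} (h : 3 - 9 * a + 9 * a ^ 2 - 5 * a ^ 3 = 0) : 133 / 250 < a :=
  cubic_strictAnti.lt_iff_gt.1 (by norm_num [h])

lemma lamHalf_pos {α : ℝ} (hα0 : 0 < α) (hα1 : α < 1) : 0 < lamHalf α := by
  have : 0 < 1 - α := by linarith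
  have : 0 < 2 - α := by linarith
  have : 0 < 3 - α := by linarith
  unfold lamHalf
  positivity

lemma mu_lamHalf {α : ℝ} (hα0 : 0 < α) (hα1 : α < 1) : mu α (lamHalf α) = 1 / 2 := by
  have : 1 - α ≠ 0 := by linarith
  have : 2 - α ≠ 0 := by linarith
  have : 3 - α ≠ 0 := by linarith
  unfold mu lamHalf
  field_simp

lemma mu_lamNu {α : ℝ} (hα0 : 0 < α) (hα1 : α < 1) : mu α (lamNu α) = g α := by
  have h1 : 0 < 1 - α := by linarith
  have h2 : 0 < 2 - α := by linarith
  have h3 : 0 < 3 - α := by linarith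
  have hc : 0 ≤ α * (3 - α) / ((1 - α) * (2 - α)) := by positivity
  calc mu α (lamNu α)
      = √((α * (3 - α) / ((1 - α) * (2 - α))) ^ 2) * lamNu α := by
        rw [Real.sqrt_sq hc, mu]; ring
    _ = √((α * (3 - α) / ((1 - α) * (2 - α))) ^ 2 * (3 * (1 - α) ^ 3 / (α ^ 2 * (3 - α)))) :=
        (Real.sqrt_mul (sq_nonneg _) _).symm
    _ = √((3 * (1 - α) * (3 - α)) / (2 - α) ^ 2) := by
        congr 1
        field_simp
    _ = g α := by rw [Real.sqrt_div' _ (sq_nonneg _), Real.sqrt_sq h2.le, g]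

lemma nu_lamNu {α : ℝ} (hα0 : 0 < α) (hα1 : α < 1) : nu α (lamNu α) = 1 := by
  have h1 : 0 < 1 - α := by linarith
  have h3 : 0 < 3 - α := by linarith
  rw [nu, lamNu, Real.sq_sqrt (by positivity)]
  field_simp

lemma mu_monotone {α : ℝ} (hα0 : 0 < α) (hα1 : α < 1) : Monotone (mu α) := by
  intro l l' hl
  have : 0 < (1 - α) * (2 - α) := mul_pos (by linarith) (by linarith)
  exact div_le_div_of_nonneg_right
    (mul_le_mul_of_nonneg_left hl (mul_nonneg hα0.le (by linarith))) this.le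

lemma nu_pos {α l : ℝ} (hα0 : 0 < α) (hα1 : α < 1) (hl : l ≠ 0) : 0 < nu α l := by
  have : 0 < 1 - α := by linarith
  have : 0 < 3 - α := by linarith
  unfold nu
  positivity

lemma nu_monotoneOn {α : ℝ} (hα1 : α < 1) : MonotoneOn (nu α) (Ici 0) := by
  intro l hl l' _ hll'
  have : 0 < 1 - α := by linarith
  have : 0 < 3 - α := by linarith
  unfold nu
  gcongr

lemma four_div_27_mul_cube_sub_self_neg {t : ℝ} (ht0 : 0 < t) (ht : t < 5 / 2) :
    4 / 27 * t ^ 3 - t < 0 := by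
  nlinarith [mul_pos ht0 (mul_pos ht0 ht0)]

end ThirdLogCoeff

open ThirdLogCoeff

theorem stmt_15 (aν a₂ : ℝ)
    (haν : aν ∈ Ioo (0:ℝ) 1 ∧ 3 - 9 * aν + 9 * aν ^ 2 - 5 * aν ^ 3 = 0 ∧
      ∀ x ∈ Ioo (0:ℝ) 1, 3 - 9 * x + 9 * x ^ 2 - 5 * x ^ 3 = 0 → x = aν)
    (ha₂ : a₂ ∈ Ioo (0:ℝ) 1 ∧ 11 * a₂ ^ 2 - 44 * a₂ + 32 = 0 ∧
      ∀ x ∈ Ioo (0:ℝ) 1, 11 * x ^ 2 - 44 * x + 32 = 0 → x = a₂) :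
    StrictAntiOn (fun x : ℝ => Real.sqrt (3 * (1 - x) * (3 - x)) / (2 - x)) (Ioo aν a₂) ∧
    ∀ α ∈ Icc aν a₂, ∀ l : ℝ,
      (1 - α) * (2 - α) / (2 * α * (3 - α)) ≤ l →
      l ≤ Real.sqrt (3 * (1 - α) ^ 3 / (α ^ 2 * (3 - α))) →
      (1 / 2 ≤ α * (3 - α) * l / ((1 - α) * (2 - α)) ∧
       α * (3 - α) * l / ((1 - α) * (2 - α)) ≤
         Real.sqrt (3 * (1 - aν) * (3 - aν)) / (2 - aν) ∧
       Real.sqrt (3 * (1 - aν) * (3 - aν)) / (2 - aν) < 1.27) ∧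
      (4 / 27 * (1 + α * (3 - α) * l / ((1 - α) * (2 - α))) ^ 3 -
          (1 + α * (3 - α) * l / ((1 - α) * (2 - α))) < 0 ∧
       0 < α ^ 2 * (3 - α) * l ^ 2 / (3 * (1 - α) ^ 3) ∧
       α ^ 2 * (3 - α) * l ^ 2 / (3 * (1 - α) ^ 3) ≤ 1) := by
  obtain ⟨⟨haν0, haν1⟩, haν_root, -⟩ := haν
  obtain ⟨⟨-, ha₂1⟩, -, -⟩ := ha₂
  have haν_gt := lt_of_cubic_root haν_root
  refine ⟨strictAntiOn_g.mono fun x hx => (hx.2.trans ha₂1).le, ?_⟩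
  intro α hα l hl_lo hl_hi
  have hα0 : 0 < α := haν0.trans_le hα.1
  have hα1 : α < 1 := hα.2.trans_lt ha₂1
  have hl0 : 0 < l := (lamHalf_pos hα0 hα1).trans_le hl_lo
  have hμ_lo : 1 / 2 ≤ mu α l := mu_lamHalf hα0 hα1 ▸ mu_monotone hα0 hα1 hl_lo
  have hμ_hi : mu α l ≤ g aν :=
    calc mu α l ≤ mu α (lamNu α) := mu_monotone hα0 hα1 hl_hi
      _ = g α := mu_lamNu hα0 hα1
      _ ≤ g aν := strictAntiOn_g.antitoneOn haν1.le hα1.le hα.1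
  have hg : g aν < 1.27 := g_lt_of_lt haν_gt haν1.le
  have hμ_lt : mu α l < 1.27 := hμ_hi.trans_lt hg
  refine ⟨⟨hμ_lo, hμ_hi, hg⟩,
    four_div_27_mul_cube_sub_self_neg (t := 1 + mu α l) (by linarith) (by norm_num at hμ_lt; linarith),
    nu_pos hα0 hα1 hl0.ne', ?_⟩
  calc nu α l ≤ nu α (lamNu α) := nu_monotoneOn hα1 hl0.le (Real.sqrt_nonneg _) hl_hi
    _ = 1 := nu_lamNu hα0 hα1
end

section
/- Let 0<α<1 and 0<λ≤λ⋆=(1−α)/√((1−α)²+α²). The function f₁(z) = z(1 − (αλ/(1−α))z)^{−1/α} (principal branch) belongs to U(α,λ), and its logarithmic coefficients satisfy γ₁ = λ/(2(1−α)), γ₂ = αλ²/(4(1−α)²), and γ₃ = α²λ³/(6(1−α)³). In particular, the bounds |γ₁| ≤ λ/(2(1−α)), |γ₂| ≤ αλ²/(4(1−α)²), and |γ₃| ≤ α²λ³/(6(1−α)³) of the main theorem are attained, hence sharp. -/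
/-
With `c = αλ/(1-α)` and `w = 1 - c z`, `f₁ z = z w^(-1/α)`, and differentiating gives
`(z/f₁ z)^(1+α) f₁' z = 1 + λ z`, provided the principal powers of `w` may be combined, i.e.
`|arg w| < απ`. Jordan's inequality applied to `sin (arg (1 - u)) = Im (1 - u) / ‖1 - u‖` gives
`|arg (1 - u)| ≤ (π/2)‖u‖`, and `λ ≤ λ⋆` yields `c < 1` and `c < 2α`. Expanding
`log (f₁ z / z) = -(1/α) log (1 - c z)` gives `γₙ = cⁿ/(2nα)`, and these are the only logarithmic
coefficients since power-series coefficients are unique.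
-/

open Complex Metric Set

theorem Real.abs_le_pi_div_two_mul_abs_sin {x : ℝ} (hx : |x| ≤ Real.pi / 2) :
    |x| ≤ Real.pi / 2 * |Real.sin x| := by
  have jordan : 2 / Real.pi * |x| ≤ |Real.sin x| := by
    rcases le_total 0 x with h | h
    · rw [abs_of_nonneg h] at hx ⊢
      exact (Real.mul_le_sin h hx).trans (le_abs_self _)
    · rw [abs_of_nonpos h] at hx ⊢
      have := Real.mul_le_sin (neg_nonneg.2 h) hx
      rw [Real.sin_neg] at this
      exact this.trans (neg_le_abs _)
  have hpi := Real.pi_pos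
  calc |x| = Real.pi / 2 * (2 / Real.pi * |x|) := by field_simp
    _ ≤ Real.pi / 2 * |Real.sin x| := by gcongr

namespace Complex

theorem neg_one_div_ofReal (a : ℝ) : -(1 : ℂ) / a = ((-a⁻¹ : ℝ) : ℂ) := by
  push_cast
  ring

theorem abs_im_le_norm_mul_norm_one_sub (u : ℂ) : |u.im| ≤ ‖u‖ * ‖1 - u‖ := by
  rw [← sq_le_sq₀ (abs_nonneg _) (by positivity), sq_abs, mul_pow, Complex.sq_norm, Complex.sq_norm,
    normSq_apply, normSq_apply]
  simp only [sub_re, one_re, sub_im, one_im]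
  -- with `s = ‖u‖²` the difference of the two sides is `(u.re - s)²`
  nlinarith [sq_nonneg (u.re - (u.re * u.re + u.im * u.im))]

theorem abs_arg_one_sub_le {u : ℂ} (hu : ‖u‖ ≤ 1) : |arg (1 - u)| ≤ Real.pi / 2 * ‖u‖ := by
  have hre : 0 ≤ (1 - u).re := by
    rw [sub_re, one_re, sub_nonneg]
    exact (re_le_norm u).trans hu
  calc |arg (1 - u)| ≤ Real.pi / 2 * |Real.sin (arg (1 - u))| :=
        Real.abs_le_pi_div_two_mul_abs_sin (abs_arg_le_pi_div_two_iff.2 hre)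
    _ ≤ Real.pi / 2 * ‖u‖ := by
        gcongr
        rw [sin_arg, abs_div, abs_norm, sub_im, one_im, zero_sub, abs_neg]
        exact div_le_of_le_mul₀ (norm_nonneg _) (norm_nonneg _) (abs_im_le_norm_mul_norm_one_sub u)

theorem log_cpow_ofReal {w : ℂ} {t : ℝ} (hw : w ≠ 0) (h : |arg w * t| < Real.pi) :
    log (w ^ (t : ℂ)) = log w * t := by
  have him : (log w * t).im = arg w * t := by simp [log_im]
  rw [cpow_def_of_ne_zero hw, log_exp] <;> rw [him] <;> linarith [abs_lt.1 h]

theorem cpow_ofReal_cpow {w : ℂ} {t : ℝ} (h : |arg w * t| < Real.pi) (s : ℂ) :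
    (w ^ (t : ℂ)) ^ s = w ^ ((t : ℂ) * s) := by
  have him : (log w * t).im = arg w * t := by simp [log_im]
  rw [cpow_mul] <;> rw [him] <;> linarith [abs_lt.1 h]

end Complex

theorem eq_zero_of_eventually_hasSum_mul_pow_zero {𝕜 : Type*} [NontriviallyNormedField 𝕜]
    {d : ℕ → 𝕜} (h : ∀ᶠ z in nhds (0 : 𝕜), HasSum (fun n => d n * z ^ n) 0) : d = 0 := by
  obtain ⟨r, hr, hball⟩ := Metric.eventually_nhds_iff_ball.1 h
  obtain ⟨x, hx0, hxr⟩ := NormedField.exists_norm_lt 𝕜 hr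
  set p := FormalMultilinearSeries.ofScalars 𝕜 d
  have hxball : x ∈ ball (0 : 𝕜) r := mem_ball_zero_iff.2 hxr
  have hrad : (‖x‖₊ : ENNReal) ≤ p.radius := by
    refine p.le_radius_of_tendsto (l := 0) ?_
    simpa [p, FormalMultilinearSeries.ofScalars_norm] using
      (hball x hxball).summable.tendsto_atTop_zero.norm
  have hp : HasFPowerSeriesOnBall (0 : 𝕜 → 𝕜) p 0 ‖x‖₊ := by
    refine ⟨hrad, by simpa using hx0, fun {y} hy => ?_⟩
    have hyr : y ∈ ball (0 : 𝕜) r := by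
      rw [mem_eball_zero_iff] at hy
      exact mem_ball_zero_iff.2 (lt_trans (by exact_mod_cast hy) hxr)
    simpa [p, FormalMultilinearSeries.ofScalars_apply_eq, mul_comm] using hball y hyr
  exact (FormalMultilinearSeries.ofScalars_series_eq_zero 𝕜).1 hp.hasFPowerSeriesAt.eq_zero

theorem IsLogCoeff.unique {f : ℂ → ℂ} {γ δ : ℕ → ℂ} (hγ : IsLogCoeff f γ) (hδ : IsLogCoeff f δ)
    (n : ℕ) : γ (n + 1) = δ (n + 1) := by
  -- with constant term `0` the difference of the two expansions also sums to `0` at `z = 0`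
  set d : ℕ → ℂ := fun n => if n = 0 then 0 else 2 * (γ n - δ n)
  have hd : ∀ z ∈ ball (0 : ℂ) 1, HasSum (fun n => d n * z ^ n) 0 := by
    intro z hz
    rcases eq_or_ne z 0 with rfl | hz0
    · convert hasSum_zero with n
      rcases n with _ | n <;> simp [d]
    · have hdiff := (hγ z hz hz0).sub (hδ z hz hz0)
      rw [sub_self] at hdiff
      refine (hasSum_nat_add_iff' 1).1 ?_
      convert hdiff using 1
      · ext n
        simp only [d, Nat.add_eq_zero_iff, one_ne_zero, and_false, if_false]
        ring
      · simp [d]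
  have := congrFun (eq_zero_of_eventually_hasSum_mul_pow_zero
    (Filter.eventually_of_mem (ball_mem_nhds 0 one_pos) hd)) (n + 1)
  simpa [d, sub_eq_zero] using this

noncomputable def extremalFunction (a : ℝ) (c : ℂ) (z : ℂ) : ℂ :=
  z * (1 - c * z) ^ (-(1 : ℂ) / a)

namespace extremalFunction

variable {a : ℝ} {c z : ℂ}

theorem norm_mul_lt_one (hc : ‖c‖ ≤ 1) (hz : ‖z‖ < 1) : ‖c * z‖ < 1 := by
  rw [norm_mul]
  exact mul_lt_one_of_nonneg_of_lt_one_right hc (norm_nonneg z) hz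

theorem one_sub_mul_mem_slitPlane (hc : ‖c‖ ≤ 1) (hz : ‖z‖ < 1) : 1 - c * z ∈ slitPlane := by
  simpa [sub_eq_add_neg] using
    mem_slitPlane_of_norm_lt_one (by simpa using norm_mul_lt_one hc hz)

theorem one_sub_mul_ne_zero (hc : ‖c‖ ≤ 1) (hz : ‖z‖ < 1) : 1 - c * z ≠ 0 :=
  slitPlane_ne_zero (one_sub_mul_mem_slitPlane hc hz)

theorem abs_arg_one_sub_mul_div_lt (ha : 0 < a) (hc : ‖c‖ ≤ 1) (hca : ‖c‖ < 2 * a)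
    (hz : ‖z‖ < 1) : |arg (1 - c * z) * a⁻¹| < Real.pi := by
  have hcz : ‖c * z‖ ≤ ‖c‖ := by
    rw [norm_mul]
    exact mul_le_of_le_one_right (norm_nonneg c) hz.le
  have harg := abs_arg_one_sub_le (hcz.trans hc)
  rw [abs_mul, abs_inv, abs_of_pos ha, ← div_eq_mul_inv, div_lt_iff₀ ha]
  nlinarith [Real.pi_pos]

theorem hasDerivAt (hw : 1 - c * z ∈ slitPlane) :
    HasDerivAt (extremalFunction a c)
      ((1 - c * z) ^ (-(1 : ℂ) / a) +
        z * (-(1 : ℂ) / a * (1 - c * z) ^ (-(1 : ℂ) / a - 1) * -c)) z := by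
  have hw' : HasDerivAt (fun z : ℂ => 1 - c * z) (-c) z := by
    simpa using ((hasDerivAt_id z).const_mul c).const_sub 1
  have h := (hasDerivAt_id' z).mul (hw'.cpow_const hw (c := -(1 : ℂ) / a))
  rwa [one_mul] at h

theorem analyticOnNhd (hc : ‖c‖ ≤ 1) : AnalyticOnNhd ℂ (extremalFunction a c) (ball 0 1) :=
  fun _ hz => analyticAt_id.mul ((analyticAt_const.sub (analyticAt_const.mul analyticAt_id)).cpow
    analyticAt_const (one_sub_mul_mem_slitPlane hc (mem_ball_zero_iff.1 hz)))

theorem deriv_zero : deriv (extremalFunction a c) 0 = 1 := by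
  simp [(hasDerivAt (a := a) (c := c) (z := 0) (by simp)).deriv]

theorem div_cpow_mul_deriv_sub_one (ha : 0 < a) (hc : ‖c‖ ≤ 1) (hca : ‖c‖ < 2 * a)
    (hz : ‖z‖ < 1) (hz0 : z ≠ 0) :
    (z / extremalFunction a c z) ^ ((1 : ℂ) + a) * deriv (extremalFunction a c) z - 1 =
      c * (1 - a) / a * z := by
  set w := 1 - c * z with hw
  have hw0 : w ≠ 0 := one_sub_mul_ne_zero hc hz
  have haC : (a : ℂ) ≠ 0 := ofReal_ne_zero.2 ha.ne'
  have hquot : z / extremalFunction a c z = w ^ ((a⁻¹ : ℝ) : ℂ) := by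
    rw [extremalFunction, neg_one_div_ofReal, ofReal_neg, cpow_neg, div_mul_cancel_left₀ hz0,
      inv_inv]
  have hpow : (w ^ ((a⁻¹ : ℝ) : ℂ)) ^ ((1 : ℂ) + a) = w ^ (((a⁻¹ : ℝ) : ℂ) * (1 + a)) :=
    cpow_ofReal_cpow (abs_arg_one_sub_mul_div_lt ha hc hca hz) _
  have hpow_add_one : w ^ (((a⁻¹ : ℝ) : ℂ) * (1 + a)) * w ^ (-(1 : ℂ) / a) = w := by
    rw [← cpow_add _ _ hw0]
    convert cpow_one w using 2
    push_cast
    field_simp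
    ring
  have hpow_add_zero : w ^ (((a⁻¹ : ℝ) : ℂ) * (1 + a)) * w ^ (-(1 : ℂ) / a - 1) = 1 := by
    rw [← cpow_add _ _ hw0]
    convert cpow_zero w using 2
    push_cast
    field_simp
    ring
  rw [hquot, hpow, (hasDerivAt (one_sub_mul_mem_slitPlane hc hz)).deriv, ← hw]
  linear_combination
    hpow_add_one + (z * (-1 / a) * -c) * hpow_add_zero + hw + c * z * mul_inv_cancel₀ haC

theorem mem_UClass (ha : 0 < a) (hc : ‖c‖ ≤ 1) (hca : ‖c‖ < 2 * a) {l : ℝ} (hl : 0 < l)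
    (hcl : ‖c * (1 - a) / a‖ ≤ l) : extremalFunction a c ∈ UClass a l := by
  refine ⟨analyticOnNhd hc, by simp [extremalFunction], deriv_zero, fun z hz hz0 => ?_⟩
  rw [mem_ball_zero_iff] at hz
  rw [div_cpow_mul_deriv_sub_one ha hc hca hz hz0, norm_mul]
  calc ‖c * (1 - a) / a‖ * ‖z‖ ≤ l * ‖z‖ := by gcongr
    _ < l := mul_lt_of_lt_one_right hl hz

theorem isLogCoeff (ha : 0 < a) (hc : ‖c‖ ≤ 1) (hca : ‖c‖ < 2 * a) :
    IsLogCoeff (extremalFunction a c) (fun n => c ^ n / (2 * n * a)) := by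
  intro z hz hz0
  rw [mem_ball_zero_iff] at hz
  have harg : |arg (1 - c * z) * (-a⁻¹)| < Real.pi := by
    rw [mul_neg, abs_neg]
    exact abs_arg_one_sub_mul_div_lt ha hc hca hz
  rw [extremalFunction, mul_div_cancel_left₀ _ hz0, neg_one_div_ofReal,
    log_cpow_ofReal (one_sub_mul_ne_zero hc hz) harg]
  have haC : (a : ℂ) ≠ 0 := ofReal_ne_zero.2 ha.ne'
  have hterm : ∀ n : ℕ, 2 * (c ^ (n + 1) / (2 * ((n + 1 : ℕ) : ℂ) * a)) * z ^ (n + 1) =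
      (c * z) ^ (n + 1) / (n + 1) * (a : ℂ)⁻¹ := by
    intro n
    push_cast
    field_simp
    ring
  have hlog : -log (1 - c * z) * (a : ℂ)⁻¹ = log (1 - c * z) * ((-a⁻¹ : ℝ) : ℂ) := by
    push_cast
    ring
  simpa only [hterm, hlog] using
    (hasSum_taylorSeries_neg_log' (norm_mul_lt_one hc hz)).mul_right (a⁻¹ : ℂ)

end extremalFunction

noncomputable def lambdaStar (a : ℝ) : ℝ :=
  (1 - a) / Real.sqrt ((1 - a) ^ 2 + a ^ 2)

theorem lambdaStar_lt_div {a : ℝ} (ha0 : 0 < a) (ha1 : a < 1) : lambdaStar a < (1 - a) / a := by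
  refine div_lt_div_of_pos_left (by linarith) ha0 ?_
  rw [Real.lt_sqrt ha0.le]
  nlinarith

theorem lambdaStar_lt_two_mul {a : ℝ} (ha1 : a < 1) : lambdaStar a < 2 * (1 - a) := by
  rw [lambdaStar, div_lt_iff₀ (Real.sqrt_pos.2 (by positivity))]
  have : 1 / 2 < Real.sqrt ((1 - a) ^ 2 + a ^ 2) := by
    rw [Real.lt_sqrt (by norm_num)]
    nlinarith [sq_nonneg (1 - 2 * a)]
  nlinarith

theorem mul_div_one_sub_lt_one {a l : ℝ} (ha0 : 0 < a) (ha1 : a < 1) (hl : l ≤ lambdaStar a) :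
    a * l / (1 - a) < 1 := by
  have := (lt_div_iff₀' ha0).1 (hl.trans_lt (lambdaStar_lt_div ha0 ha1))
  rwa [div_lt_one (sub_pos.2 ha1)]

theorem mul_div_one_sub_lt_two_mul {a l : ℝ} (ha0 : 0 < a) (ha1 : a < 1) (hl : l ≤ lambdaStar a) :
    a * l / (1 - a) < 2 * a := by
  have := hl.trans_lt (lambdaStar_lt_two_mul ha1)
  rw [div_lt_iff₀ (sub_pos.2 ha1)]
  nlinarith

theorem stmt_17 (a l : ℝ) (ha : a ∈ Ioo (0:ℝ) 1) (hl : 0 < l)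
    (hls : l ≤ (1 - a) / Real.sqrt ((1 - a) ^ 2 + a ^ 2)) :
    (fun z : ℂ => z * (1 - ((a * l / (1 - a) : ℝ) : ℂ) * z) ^ (-(1:ℂ) / (a:ℂ)))
      ∈ UClass a l ∧
    ∀ γ : ℕ → ℂ,
      IsLogCoeff (fun z : ℂ => z * (1 - ((a * l / (1 - a) : ℝ) : ℂ) * z) ^ (-(1:ℂ) / (a:ℂ))) γ →
      γ 1 = ((l / (2 * (1 - a)) : ℝ) : ℂ) ∧
      γ 2 = ((a * l ^ 2 / (4 * (1 - a) ^ 2) : ℝ) : ℂ) ∧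
      γ 3 = ((a ^ 2 * l ^ 3 / (6 * (1 - a) ^ 3) : ℝ) : ℂ) := by
  obtain ⟨ha0, ha1⟩ := ha
  have h1a : 0 < 1 - a := sub_pos.2 ha1
  have h1aC : (1 : ℂ) - a ≠ 0 := by exact_mod_cast h1a.ne'
  have haC : (a : ℂ) ≠ 0 := ofReal_ne_zero.2 ha0.ne'
  have hnorm : ‖((a * l / (1 - a) : ℝ) : ℂ)‖ = a * l / (1 - a) := by
    rw [norm_real, Real.norm_of_nonneg (by positivity)]
  have hc1 : ‖((a * l / (1 - a) : ℝ) : ℂ)‖ ≤ 1 := by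
    rw [hnorm]
    exact (mul_div_one_sub_lt_one ha0 ha1 hls).le
  have hca : ‖((a * l / (1 - a) : ℝ) : ℂ)‖ < 2 * a := by
    rw [hnorm]
    exact mul_div_one_sub_lt_two_mul ha0 ha1 hls
  have hcl : ‖((a * l / (1 - a) : ℝ) : ℂ) * (1 - a) / a‖ ≤ l := by
    have : ((a * l / (1 - a) : ℝ) : ℂ) * (1 - a) / a = l := by
      push_cast
      field_simp
    rw [this, norm_real, Real.norm_of_nonneg hl.le]
  refine ⟨extremalFunction.mem_UClass ha0 hc1 hca hl hcl, fun γ hγ => ?_⟩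
  have hcoeff := hγ.unique (extremalFunction.isLogCoeff ha0 hc1 hca)
  refine ⟨(hcoeff 0).trans ?_, (hcoeff 1).trans ?_, (hcoeff 2).trans ?_⟩ <;> push_cast <;>
    field_simp <;> ring
end
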